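/- Let g ≥ 2 and let Λ₁, …, Λ_g be lattices in ℂ such that the additive subgroup Λ₁ + Λ₂ + ⋯ + Λ_g is dense in ℂ. Then there exist indices j, k with 2 ≤ j, k ≤ g such that Λ₁ + Λ_j is not discrete and Λ₁ + Λ_j + Λ_k is dense in ℂ. -/

import Mathlib

open AddSubgroup Filter Topology Module

namespace Stmt1Aux

/-- Density criterion: if the closure of `S` contains the kernel (a line) of a surjective
functional `f` and the image of `S` under `f` is dense, then `S` is dense. -/
lemma dense_of_ker_dense_image (f : ℂ →ₗ[ℝ] ℝ) (u : ℂ) (hu : f u = 1)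
    (S : AddSubgroup ℂ) (hker : ∀ x : ℂ, f x = 0 → x ∈ _root_.closure (S : Set ℂ))
    (him : Dense (f '' (S : Set ℂ))) : Dense (S : Set ℂ) := by
  intro x
  rw [← closure_closure (s := (S : Set ℂ))]
  rw [Metric.mem_closure_iff]
  intro ε hε
  have hδ : 0 < ε / (‖u‖ + 1) := div_pos hε (by positivity)
  have hfx : f x ∈ _root_.closure (f '' (S : Set ℂ)) := him _
  rw [Metric.mem_closure_iff] at hfx
  obtain ⟨r, hr, hdist⟩ := hfx (ε / (‖u‖ + 1)) hδ
  obtain ⟨s, hsS, rfl⟩ := hr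
  set c : ℝ := f x - f s with hc
  refine ⟨s + (x - s - c • u), ?_, ?_⟩
  · have h0 : f (x - s - c • u) = 0 := by
      rw [map_sub, map_sub, map_smul, hu, smul_eq_mul, mul_one, hc]
      ring
    have h1 : x - s - c • u ∈ _root_.closure (S : Set ℂ) := hker _ h0
    have h2 : s ∈ _root_.closure (S : Set ℂ) := subset_closure hsS
    exact S.topologicalClosure.add_mem h2 h1
  · have heq : x - (s + (x - s - c • u)) = c • u := by abel
    rw [dist_eq_norm, heq, norm_smul]
    have h3 : ‖c‖ < ε / (‖u‖ + 1) := by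
      rw [hc]; rwa [Real.dist_eq] at hdist
    calc ‖c‖ * ‖u‖ ≤ ‖c‖ * (‖u‖ + 1) := by
            apply mul_le_mul_of_nonneg_left (by linarith) (norm_nonneg _)
      _ < (ε / (‖u‖ + 1)) * (‖u‖ + 1) := by
            apply mul_lt_mul_of_pos_right h3 (by positivity)
      _ = ε := by field_simp

/-- Non-density criterion: if the image of `S` under a surjective functional lies in a
nontrivial cyclic subgroup of `ℝ`, then `S` is not dense. -/
lemma not_dense_of_im_zmultiples (f : ℂ →ₗ[ℝ] ℝ) (x₀ : ℂ) (hx₀ : f x₀ = 1)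
    (c : ℝ) (hc : c ≠ 0) (S : AddSubgroup ℂ)
    (hS : ∀ s ∈ S, f s ∈ zmultiples c) : ¬ Dense (S : Set ℂ) := by
  intro hdense
  have hcont : Continuous f := f.continuous_of_finiteDimensional
  have habs : 0 < |c| := abs_pos.mpr hc
  have hopen : IsOpen (f ⁻¹' (Set.Ioo (|c|/4) (3*|c|/4))) := isOpen_Ioo.preimage hcont
  have hne : (f ⁻¹' (Set.Ioo (|c|/4) (3*|c|/4))).Nonempty := by
    refine ⟨(|c|/2) • x₀, ?_⟩
    simp only [Set.mem_preimage, map_smul, hx₀, smul_eq_mul, mul_one, Set.mem_Ioo]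
    constructor <;> linarith
  obtain ⟨s, hsU, hsS⟩ := hdense.inter_open_nonempty _ hopen hne
  obtain ⟨k, hk⟩ := (mem_zmultiples_iff).mp (hS s hsS)
  rw [zsmul_eq_mul] at hk
  simp only [Set.mem_preimage, Set.mem_Ioo] at hsU
  rw [← hk] at hsU
  rcases eq_or_ne k 0 with rfl | hk0
  · simp at hsU; linarith [hsU.1, hsU.2]
  · have h1 : (1:ℝ) ≤ |(k:ℝ)| := by
      have := Int.one_le_abs hk0
      exact_mod_cast this
    have h2 : |(k:ℝ) * c| = |(k:ℝ)| * |c| := abs_mul _ _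
    have h4 : |(k:ℝ) * c| = (k:ℝ) * c := abs_of_pos (by linarith [hsU.1])
    have h5 : |c| ≤ |(k:ℝ)| * |c| := le_mul_of_one_le_left habs.le h1
    linarith [hsU.2]

/-- If `S` is not discrete, it has nonzero elements of arbitrarily small norm. -/
lemma exists_norm_lt_of_not_discrete (S : AddSubgroup ℂ) (h : ¬ DiscreteTopology S)
    {ε : ℝ} (hε : 0 < ε) : ∃ s ∈ S, s ≠ 0 ∧ ‖s‖ < ε := by
  by_contra hcon
  push_neg at hcon
  apply h
  rw [discreteTopology_iff_isOpen_singleton]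
  intro x
  have hset : ({x} : Set S) = (Subtype.val) ⁻¹' (Metric.ball (x : ℂ) ε) := by
    ext y
    simp only [Set.mem_singleton_iff, Set.mem_preimage, Metric.mem_ball]
    constructor
    · rintro rfl; simpa using hε
    · intro hy
      have hmem : (y : ℂ) - x ∈ S := sub_mem y.2 x.2
      by_contra hne
      have hne' : (y : ℂ) - (x : ℂ) ≠ 0 :=
        sub_ne_zero.mpr (fun hh => hne (Subtype.ext hh))
      have hge := hcon _ hmem hne'
      rw [dist_eq_norm] at hy
      linarith
  rw [hset]
  exact Metric.isOpen_ball.preimage continuous_subtype_val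

/-- If `S` is not discrete, then its closure contains a whole line. -/
lemma exists_line_subset_closure (S : AddSubgroup ℂ) (h : ¬ DiscreteTopology S) :
    ∃ u : ℂ, u ≠ 0 ∧ ∀ t : ℝ, t • u ∈ _root_.closure (S : Set ℂ) := by
  have hch : ∀ n : ℕ, ∃ s : ℂ, s ∈ S ∧ s ≠ 0 ∧ ‖s‖ < 1/(n+1) := by
    intro n
    obtain ⟨s, h1, h2, h3⟩ := exists_norm_lt_of_not_discrete S h
      (ε := 1/(n+1)) (by positivity)
    exact ⟨s, h1, h2, h3⟩
  choose s hs hs0 hsn using hch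
  have hsnorm : ∀ n, ‖s n‖ ≠ 0 := fun n => norm_ne_zero_iff.mpr (hs0 n)
  have hdmem : ∀ n, ‖s n‖⁻¹ • s n ∈ Metric.sphere (0:ℂ) 1 := by
    intro n
    have h1 : ‖(‖s n‖⁻¹ • s n)‖ = 1 := by
      rw [norm_smul, norm_inv, norm_norm, inv_mul_cancel₀ (hsnorm n)]
    simpa [Metric.mem_sphere, dist_zero_right] using h1
  obtain ⟨u, hu, φ, hφ, hconv⟩ := (isCompact_sphere (0:ℂ) 1).tendsto_subseq hdmem
  have hu1 : ‖u‖ = 1 := by simpa using hu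
  refine ⟨u, by intro h0; rw [h0] at hu1; simp at hu1, ?_⟩
  intro t
  set k : ℕ → ℤ := fun n => ⌊t / ‖s (φ n)‖⌋ with hk
  have hmem : ∀ n, (k n • s (φ n)) ∈ (S : Set ℂ) := fun n => zsmul_mem (hs _) _
  have hpos : ∀ n, (0:ℝ) < ‖s (φ n)‖ := fun n => (hsnorm _).lt_of_le' (norm_nonneg _)
  have heq : ∀ n : ℕ, ((k n : ℝ) * ‖s (φ n)‖) • (‖s (φ n)‖⁻¹ • s (φ n)) = k n • s (φ n) := by
    intro n
    rw [smul_smul, mul_assoc, mul_inv_cancel₀ (hsnorm _), mul_one, Int.cast_smul_eq_zsmul]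
  have hsc : Tendsto (fun n => (k n : ℝ) * ‖s (φ n)‖) atTop (𝓝 t) := by
    have hlow : ∀ n : ℕ, t - 1/(n+1) ≤ (k n : ℝ) * ‖s (φ n)‖ := by
      intro n
      have h1 : t / ‖s (φ n)‖ < k n + 1 := Int.lt_floor_add_one _
      have h2 : t < ((k n : ℝ) + 1) * ‖s (φ n)‖ := (div_lt_iff₀ (hpos n)).mp h1
      have h3 : ‖s (φ n)‖ < 1/(n+1) := by
        refine lt_of_lt_of_le (hsn (φ n)) ?_
        have hle : (n:ℝ) + 1 ≤ (φ n : ℝ) + 1 := by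
          have := hφ.le_apply (x := n)
          have : (n:ℝ) ≤ (φ n : ℝ) := by exact_mod_cast this
          linarith
        exact one_div_le_one_div_of_le (by positivity) hle
      nlinarith
    have hhigh : ∀ n : ℕ, (k n : ℝ) * ‖s (φ n)‖ ≤ t := by
      intro n
      have h1 : (k n : ℝ) ≤ t / ‖s (φ n)‖ := Int.floor_le _
      rw [le_div_iff₀ (hpos n)] at h1
      linarith
    refine tendsto_of_tendsto_of_tendsto_of_le_of_le ?_ tendsto_const_nhds hlow hhigh
    have : Tendsto (fun n : ℕ => t - 1/(n+1)) atTop (𝓝 (t - 0)) :=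
      tendsto_const_nhds.sub tendsto_one_div_add_atTop_nhds_zero_nat
    simpa using this
  have hconv2 : Tendsto (fun n => k n • s (φ n)) atTop (𝓝 (t • u)) := by
    have := hsc.smul hconv
    simp only [Function.comp_def] at this
    simpa only [heq] using this
  exact mem_closure_of_tendsto hconv2 (Eventually.of_forall hmem)

/-- In a discrete subgroup containing an `ℝ`-basis `a, b`, every element is a rational
combination of `a` and `b`. -/
lemma rat_combo_of_discrete {a b v : ℂ} (hab : LinearIndependent ℝ ![a, b])
    (S : AddSubgroup ℂ) (ha : a ∈ S) (hb : b ∈ S) (hv : v ∈ S)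
    (hdisc : DiscreteTopology S) :
    ∃ q r : ℚ, v = (q : ℝ) • a + (r : ℝ) • b := by
  classical
  set L : Submodule ℤ ℂ := AddSubgroup.toIntSubmodule S with hL
  have hdiscL : DiscreteTopology L := hdisc
  have hspan2 : Submodule.span ℝ ({a, b} : Set ℂ) = ⊤ := by
    have hcard : Fintype.card (Fin 2) = finrank ℝ ℂ := by
      simp [Complex.finrank_real_complex]
    let Bas : Basis (Fin 2) ℝ ℂ := basisOfLinearIndependentOfCardEqFinrank hab hcard
    have hBas : ⇑Bas = ![a, b] := coe_basisOfLinearIndependentOfCardEqFinrank _ _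
    have := Bas.span_eq
    rw [hBas] at this
    rw [← this]
    congr 1
    ext x
    simp [Fin.exists_fin_two, or_comm]
  have hspan : Submodule.span ℝ (L : Set ℂ) = ⊤ := by
    apply eq_top_iff.mpr
    rw [← hspan2]
    apply Submodule.span_le.mpr
    intro x hx
    rcases hx with rfl | hx
    · exact Submodule.subset_span (by simpa [hL] using ha)
    · rcases hx with rfl
      exact Submodule.subset_span (by simpa [hL] using hb)
  have hzl : IsZLattice ℝ L := ⟨hspan⟩
  have hrank := ZLattice.rank ℝ L
  rw [Complex.finrank_real_complex] at hrank
  have hfin : Module.Finite ℤ L := ZLattice.module_finite ℝ L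
  have hmemL : ∀ x : ℂ, x ∈ S → x ∈ L := fun x hx => by rw [hL]; exact hx
  have hni : ¬ LinearIndependent ℤ
      ![(⟨a, hmemL a ha⟩ : L), ⟨b, hmemL b hb⟩, ⟨v, hmemL v hv⟩] := by
    intro hli
    have := hli.fintype_card_le_finrank
    rw [hrank] at this
    simp at this
  obtain ⟨gc, hsum, i, hi⟩ := Fintype.not_linearIndependent_iff.mp hni
  have hsum' : gc 0 • a + gc 1 • b + gc 2 • v = 0 := by
    have := congrArg (L.subtype) hsum
    simp only [map_sum, map_zsmul, map_zero] at this
    rw [Fin.sum_univ_three] at this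
    simpa using this
  by_cases hg2 : gc 2 = 0
  · exfalso
    have hzero : ((gc 0 : ℝ)) • a + ((gc 1 : ℝ)) • b = 0 := by
      rw [Int.cast_smul_eq_zsmul, Int.cast_smul_eq_zsmul]
      rw [hg2] at hsum'
      simpa using hsum'
    have hall := Fintype.linearIndependent_iff.mp hab ![(gc 0 : ℝ), (gc 1 : ℝ)] (by
      rw [Fin.sum_univ_two]
      simpa using hzero)
    fin_cases i
    · have h := hall 0; rw [Matrix.cons_val_zero] at h
      exact hi (by exact_mod_cast h)
    · have h := hall 1; rw [Matrix.cons_val_one, Matrix.cons_val_zero] at h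
      exact hi (by exact_mod_cast h)
    · exact hi hg2
  · refine ⟨-(gc 0 : ℚ)/(gc 2 : ℚ), -(gc 1 : ℚ)/(gc 2 : ℚ), ?_⟩
    have hg2C : ((gc 2 : ℂ)) ≠ 0 := by exact_mod_cast hg2
    have h1 : (gc 0 : ℂ) * a + (gc 1 : ℂ) * b + (gc 2 : ℂ) * v = 0 := by
      have h := hsum'
      rw [← Int.cast_smul_eq_zsmul ℝ (gc 0), ← Int.cast_smul_eq_zsmul ℝ (gc 1),
        ← Int.cast_smul_eq_zsmul ℝ (gc 2)] at h
      simpa [Complex.real_smul] using h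
    rw [Complex.real_smul, Complex.real_smul]
    push_cast
    field_simp
    linear_combination h1


/-- A rational with denominator dividing `N` is an integer multiple of `1/N`. -/
lemma rat_mem_inv_nat_zmultiples {q : ℚ} {N : ℕ} (hN : N ≠ 0) (h : q.den ∣ N) :
    (q : ℝ) ∈ AddSubgroup.zmultiples ((N : ℝ)⁻¹) := by
  obtain ⟨m, hm⟩ := h
  have hm0 : m ≠ 0 := by
    rintro rfl
    rw [Nat.mul_zero] at hm
    exact hN hm
  have hden : (q.den : ℝ) ≠ 0 := Nat.cast_ne_zero.mpr q.den_nz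
  have hmr : (m : ℝ) ≠ 0 := Nat.cast_ne_zero.mpr hm0
  refine mem_zmultiples_iff.mpr ⟨q.num * m, ?_⟩
  rw [zsmul_eq_mul, hm, Rat.cast_def]
  push_cast
  field_simp

/-- `zmultiples (c/m) ≤ zmultiples (c/N)` when `m ∣ N`. -/
lemma zmultiples_div_le {c : ℝ} {m N : ℤ} (hdvd : m ∣ N) (hm0 : m ≠ 0) (hN0 : N ≠ 0) :
    AddSubgroup.zmultiples (c / (m:ℝ)) ≤ AddSubgroup.zmultiples (c / (N:ℝ)) := by
  intro x hx
  obtain ⟨k, hk⟩ := mem_zmultiples_iff.mp hx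
  obtain ⟨d, hd⟩ := hdvd
  have hd0 : d ≠ 0 := by rintro rfl; rw [Int.mul_zero] at hd; exact hN0 hd
  have hmr : (m : ℝ) ≠ 0 := Int.cast_ne_zero.mpr hm0
  have hdr : (d : ℝ) ≠ 0 := Int.cast_ne_zero.mpr hd0
  refine mem_zmultiples_iff.mpr ⟨k * d, ?_⟩
  rw [zsmul_eq_mul] at hk ⊢
  rw [← hk, hd]
  push_cast
  field_simp

end Stmt1Aux

open Stmt1Aux

/-- A lattice in `ℂ`: an additive subgroup of the form `ℤa + ℤb` with `a, b`
linearly independent over `ℝ`. -/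
def IsLatticeC (Λ : AddSubgroup ℂ) : Prop :=
  ∃ a b : ℂ, LinearIndependent ℝ ![a, b] ∧ Λ = AddSubgroup.closure {a, b}

/-- If `Λ₁ + ⋯ + Λ_g` is dense in `ℂ`, then there are `j, k` with `2 ≤ j, k ≤ g` such that
`Λ₁ + Λ_j` is not discrete and `Λ₁ + Λ_j + Λ_k` is dense in `ℂ`. -/
theorem stmt1 (g : ℕ) (hg : 2 ≤ g) (Λ : Fin g → AddSubgroup ℂ)
    (hΛ : ∀ i, IsLatticeC (Λ i))
    (hd : Dense ((⨆ i, Λ i : AddSubgroup ℂ) : Set ℂ)) :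
    ∃ j k : Fin g, j.val ≠ 0 ∧ k.val ≠ 0 ∧
      ¬ DiscreteTopology ↥(Λ ⟨0, by omega⟩ ⊔ Λ j) ∧
      Dense ((Λ ⟨0, by omega⟩ ⊔ Λ j ⊔ Λ k : AddSubgroup ℂ) : Set ℂ) := by
  classical
  have hΛ' : ∀ i, ∃ a b : ℂ, LinearIndependent ℝ ![a, b] ∧
      Λ i = AddSubgroup.closure {a, b} := hΛ
  choose A B hli hcl using hΛ'
  have hzlt : (0:ℕ) < g := by omega
  set z : Fin g := ⟨0, hzlt⟩ with hzdef
  set a := A z with hadef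
  set b := B z with hbdef
  have hcard : Fintype.card (Fin 2) = Module.finrank ℝ ℂ := by
    simp [Complex.finrank_real_complex]
  set Bas : Basis (Fin 2) ℝ ℂ := basisOfLinearIndependentOfCardEqFinrank (hli z) hcard
    with hBasdef
  have hBas : ⇑Bas = ![a, b] := coe_basisOfLinearIndependentOfCardEqFinrank _ _
  set f0 : ℂ →ₗ[ℝ] ℝ := Bas.coord 0 with hf0def
  set f1 : ℂ →ₗ[ℝ] ℝ := Bas.coord 1 with hf1def
  have hBas0 : Bas 0 = a := by rw [show Bas 0 = ![a,b] 0 from congrFun hBas 0]; simp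
  have hBas1 : Bas 1 = b := by rw [show Bas 1 = ![a,b] 1 from congrFun hBas 1]; simp
  have hf0a : f0 a = 1 := by rw [← hBas0, hf0def, Basis.coord_apply, Basis.repr_self]; simp
  have hf0b : f0 b = 0 := by rw [← hBas1, hf0def, Basis.coord_apply, Basis.repr_self]; simp
  have hf1a : f1 a = 0 := by rw [← hBas0, hf1def, Basis.coord_apply, Basis.repr_self]; simp
  have hf1b : f1 b = 1 := by rw [← hBas1, hf1def, Basis.coord_apply, Basis.repr_self]; simp
  have hrepr : ∀ x : ℂ, x = f0 x • a + f1 x • b := by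
    intro x
    have h := Bas.sum_repr x
    rw [Fin.sum_univ_two, hBas0, hBas1] at h
    rw [hf0def, hf1def, Basis.coord_apply, Basis.coord_apply]
    exact h.symm
  have hcoord : ∀ x y : ℂ, f0 x = f0 y → f1 x = f1 y → x = y := by
    intro x y h h'
    rw [hrepr x, hrepr y, h, h']
  have hgen : ∀ i : Fin g, A i ∈ Λ i ∧ B i ∈ Λ i := by
    intro i
    rw [hcl i]
    exact ⟨AddSubgroup.subset_closure (by simp), AddSubgroup.subset_closure (by simp)⟩
  set P : ℂ → Prop := fun x => (∃ q : ℚ, f0 x = (q:ℝ)) ∧ (∃ q : ℚ, f1 x = (q:ℝ)) with hPdef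
  by_cases hcase : ∀ i : Fin g, P (A i) ∧ P (B i)
  · -- all generators have rational coordinates: contradiction with density
    exfalso
    have h' : ∀ i : Fin g, ∃ qA qB : ℚ, f0 (A i) = (qA:ℝ) ∧ f0 (B i) = (qB:ℝ) := by
      intro i
      obtain ⟨⟨⟨qA, hA⟩, -⟩, ⟨⟨qB, hB⟩, -⟩⟩ := hcase i
      exact ⟨qA, qB, hA, hB⟩
    choose qA qB hqA hqB using h'
    set N : ℕ := ∏ i : Fin g, ((qA i).den * (qB i).den) with hN
    have hNpos : N ≠ 0 := by
      rw [hN]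
      apply Finset.prod_ne_zero_iff.mpr
      intro i _
      exact Nat.mul_ne_zero (qA i).den_nz (qB i).den_nz
    have hle : ∀ i : Fin g, Λ i ≤ AddSubgroup.comap f0.toAddMonoidHom
        (AddSubgroup.zmultiples ((N:ℝ)⁻¹)) := by
      intro i
      rw [hcl i]
      refine (AddSubgroup.closure_le _).mpr ?_
      have hdvdA : (qA i).den ∣ N := by
        refine dvd_trans (dvd_mul_right _ _) (Finset.dvd_prod_of_mem _ (Finset.mem_univ i))
      have hdvdB : (qB i).den ∣ N := by
        refine dvd_trans (dvd_mul_left _ _) (Finset.dvd_prod_of_mem _ (Finset.mem_univ i))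
      rintro x (rfl | rfl)
      · show f0 (A i) ∈ AddSubgroup.zmultiples ((N:ℝ)⁻¹)
        rw [hqA i]
        exact rat_mem_inv_nat_zmultiples hNpos hdvdA
      · show f0 (B i) ∈ AddSubgroup.zmultiples ((N:ℝ)⁻¹)
        rw [hqB i]
        exact rat_mem_inv_nat_zmultiples hNpos hdvdB
    have hsup : (⨆ i, Λ i) ≤ AddSubgroup.comap f0.toAddMonoidHom
        (AddSubgroup.zmultiples ((N:ℝ)⁻¹)) := iSup_le hle
    refine not_dense_of_im_zmultiples f0 a hf0a ((N:ℝ)⁻¹)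
      (inv_ne_zero (Nat.cast_ne_zero.mpr hNpos)) _ (fun s hs => hsup hs) hd
  · -- some generator has an irrational coordinate
    rw [not_forall] at hcase
    obtain ⟨j, hj⟩ := hcase
    have hPa : P a := ⟨⟨1, by rw [hf0a]; norm_num⟩, ⟨0, by rw [hf1a]; norm_num⟩⟩
    have hPb : P b := ⟨⟨0, by rw [hf0b]; norm_num⟩, ⟨1, by rw [hf1b]; norm_num⟩⟩
    obtain ⟨v, hvor, hvP⟩ : ∃ v : ℂ, (v = A j ∨ v = B j) ∧ ¬ P v := by
      rcases Classical.em (P (A j)) with hA | hA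
      · exact ⟨B j, Or.inr rfl, fun hB => hj ⟨hA, hB⟩⟩
      · exact ⟨A j, Or.inl rfl, hA⟩
    have hj0 : (j : ℕ) ≠ 0 := by
      intro h0
      have hjz : j = z := Fin.ext h0
      apply hvP
      rcases hvor with rfl | rfl
      · rw [hjz, ← hadef]; exact hPa
      · rw [hjz, ← hbdef]; exact hPb
    have haH : a ∈ Λ z ⊔ Λ j := (le_sup_left : Λ z ≤ Λ z ⊔ Λ j) (hgen z).1
    have hbH : b ∈ Λ z ⊔ Λ j := (le_sup_left : Λ z ≤ Λ z ⊔ Λ j) (hgen z).2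
    have hvH : v ∈ Λ z ⊔ Λ j := by
      apply (le_sup_right : Λ j ≤ Λ z ⊔ Λ j)
      rcases hvor with rfl | rfl
      exacts [(hgen j).1, (hgen j).2]
    have hnd : ¬ DiscreteTopology ↥(Λ z ⊔ Λ j) := by
      intro hdisc
      obtain ⟨q, r, hqr⟩ := rat_combo_of_discrete (hli z) (Λ z ⊔ Λ j) haH hbH hvH hdisc
      apply hvP
      constructor
      · refine ⟨q, ?_⟩
        rw [hqr, map_add, map_smul, map_smul, hf0a, hf0b]
        simp
      · refine ⟨r, ?_⟩
        rw [hqr, map_add, map_smul, map_smul, hf1a, hf1b]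
        simp
    obtain ⟨u, hu0, hline⟩ := exists_line_subset_closure (Λ z ⊔ Λ j) hnd
    set u1 : ℝ := f0 u with hu1
    set u2 : ℝ := f1 u with hu2
    set f : ℂ →ₗ[ℝ] ℝ := u2 • f0 - u1 • f1 with hfdef
    have hf : ∀ x, f x = u2 * f0 x - u1 * f1 x := by
      intro x
      rw [hfdef]
      simp [LinearMap.sub_apply, LinearMap.smul_apply, smul_eq_mul]
    have hfa : f a = u2 := by rw [hf, hf0a, hf1a]; ring
    have hfb : f b = -u1 := by rw [hf, hf0b, hf1b]; ring
    have hne : u1 ≠ 0 ∨ u2 ≠ 0 := by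
      by_contra hcon
      push_neg at hcon
      apply hu0
      have := hrepr u
      rw [← hu1, ← hu2, hcon.1, hcon.2] at this
      simpa using this
    have hker : ∀ x : ℂ, f x = 0 → x ∈ _root_.closure ((Λ z ⊔ Λ j : AddSubgroup ℂ) : Set ℂ) := by
      intro x hx
      rw [hf] at hx
      have hxeq : ∃ t : ℝ, x = t • u := by
        rcases hne with h1 | h2
        · refine ⟨f0 x / u1, hcoord _ _ ?_ ?_⟩
          · rw [map_smul, smul_eq_mul, ← hu1, div_mul_cancel₀ _ h1]
          · rw [map_smul, smul_eq_mul, ← hu2]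
            field_simp [h1]
            linarith [hx]
        · refine ⟨f1 x / u2, hcoord _ _ ?_ ?_⟩
          · rw [map_smul, smul_eq_mul, ← hu1]
            field_simp [h2]
            linarith [hx]
          · rw [map_smul, smul_eq_mul, ← hu2, div_mul_cancel₀ _ h2]
      obtain ⟨t, rfl⟩ := hxeq
      exact hline t
    obtain ⟨x₀, hx₀⟩ : ∃ x₀ : ℂ, f x₀ = 1 := by
      rcases hne with h1 | h2
      · refine ⟨(-u1)⁻¹ • b, ?_⟩
        rw [map_smul, hfb, smul_eq_mul]
        exact inv_mul_cancel₀ (neg_ne_zero.mpr h1)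
      · refine ⟨u2⁻¹ • a, ?_⟩
        rw [map_smul, hfa, smul_eq_mul]
        exact inv_mul_cancel₀ h2
    rcases AddSubgroup.dense_or_cyclic (AddSubgroup.map f.toAddMonoidHom (Λ z ⊔ Λ j))
      with hdense | ⟨c, hcyc⟩
    · -- Λ z ⊔ Λ j itself is dense; take k = j
      have hHd : Dense ((Λ z ⊔ Λ j : AddSubgroup ℂ) : Set ℂ) := by
        apply dense_of_ker_dense_image f x₀ hx₀ _ hker
        have h := hdense
        rw [AddSubgroup.coe_map, LinearMap.toAddMonoidHom_coe] at h
        exact h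
      refine ⟨j, j, hj0, hj0, hnd, ?_⟩
      show Dense ((Λ z ⊔ Λ j ⊔ Λ j : AddSubgroup ℂ) : Set ℂ)
      rw [sup_assoc, sup_idem]
      exact hHd
    · have hcmem : ∀ x ∈ Λ z ⊔ Λ j, f x ∈ AddSubgroup.closure ({c} : Set ℝ) := by
        intro x hx
        rw [← hcyc]
        exact AddSubgroup.mem_map_of_mem _ hx
      have hc0 : c ≠ 0 := by
        rintro rfl
        have h1 := hcmem a haH
        have h2 := hcmem b hbH
        rw [AddSubgroup.closure_singleton_zero, AddSubgroup.mem_bot] at h1 h2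
        rw [hfa] at h1
        rw [hfb] at h2
        rcases hne with h | h
        · exact h (by linarith)
        · exact h h1
      by_cases hex : ∃ kk : Fin g, (kk:ℕ) ≠ 0 ∧
          Dense ((Λ z ⊔ Λ j ⊔ Λ kk : AddSubgroup ℂ) : Set ℂ)
      · obtain ⟨kk, hkk0, hkkd⟩ := hex
        exact ⟨j, kk, hj0, hkk0, hnd, hkkd⟩
      · exfalso
        have hm : ∀ kk : Fin g, ∃ m : ℤ, m ≠ 0 ∧
            ∀ s ∈ Λ kk, f s ∈ AddSubgroup.zmultiples (c / (m:ℝ)) := by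
          intro kk
          by_cases hkk0 : (kk:ℕ) = 0
          · refine ⟨1, one_ne_zero, ?_⟩
            intro s hs
            have hkz : kk = z := Fin.ext hkk0
            rw [hkz] at hs
            have := hcmem s ((le_sup_left : Λ z ≤ Λ z ⊔ Λ j) hs)
            rw [← AddSubgroup.zmultiples_eq_closure] at this
            simpa using this
          · rcases AddSubgroup.dense_or_cyclic
              (AddSubgroup.map f.toAddMonoidHom (Λ z ⊔ Λ j ⊔ Λ kk)) with hdk | ⟨ck, hck⟩
            · exfalso
              refine hex ⟨kk, hkk0, ?_⟩
              apply dense_of_ker_dense_image f x₀ hx₀ _ ?_ ?_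
              · intro x hx
                refine closure_mono ?_ (hker x hx)
                exact SetLike.coe_subset_coe.mpr le_sup_left
              · have h := hdk
                rw [AddSubgroup.coe_map, LinearMap.toAddMonoidHom_coe] at h
                exact h
            · have hsub : AddSubgroup.map f.toAddMonoidHom (Λ z ⊔ Λ j) ≤
                  AddSubgroup.map f.toAddMonoidHom (Λ z ⊔ Λ j ⊔ Λ kk) :=
                AddSubgroup.map_mono le_sup_left
              have hcin : c ∈ AddSubgroup.closure ({ck} : Set ℝ) := by
                rw [← hck]
                apply hsub
                rw [hcyc]
                exact AddSubgroup.subset_closure (Set.mem_singleton c)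
              obtain ⟨m, hmc⟩ := AddSubgroup.mem_closure_singleton.mp hcin
              have hm0 : m ≠ 0 := by
                rintro rfl
                rw [zero_zsmul] at hmc
                exact hc0 hmc.symm
              have hmr : (m:ℝ) ≠ 0 := Int.cast_ne_zero.mpr hm0
              refine ⟨m, hm0, ?_⟩
              intro s hs
              have hsmem : f s ∈ AddSubgroup.closure ({ck} : Set ℝ) := by
                rw [← hck]
                exact AddSubgroup.mem_map_of_mem _ ((le_sup_right : Λ kk ≤ _) hs)
              obtain ⟨n, hn⟩ := AddSubgroup.mem_closure_singleton.mp hsmem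
              refine AddSubgroup.mem_zmultiples_iff.mpr ⟨n, ?_⟩
              rw [zsmul_eq_mul] at hn hmc ⊢
              rw [← hn]
              have hckval : ck = c / m := by
                field_simp [← hmc]
                rw [← hmc]; ring
              rw [hckval]
        choose m hm0 hmmem using hm
        set N : ℤ := ∏ kk : Fin g, m kk with hN
        have hNz : N ≠ 0 := by
          rw [hN]
          exact Finset.prod_ne_zero_iff.mpr (fun kk _ => hm0 kk)
        have hNr : (N:ℝ) ≠ 0 := Int.cast_ne_zero.mpr hNz
        have hfinal : ∀ s ∈ (⨆ i, Λ i), f s ∈ AddSubgroup.zmultiples (c / (N:ℝ)) := by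
          have hsup : (⨆ i, Λ i) ≤ AddSubgroup.comap f.toAddMonoidHom
              (AddSubgroup.zmultiples (c / (N:ℝ))) := by
            apply iSup_le
            intro i s hs
            exact zmultiples_div_le (hN ▸ Finset.dvd_prod_of_mem m (Finset.mem_univ i))
              (hm0 i) hNz (hmmem i s hs)
          exact fun s hs => hsup hs
        exact not_dense_of_im_zmultiples f x₀ hx₀ _ (div_ne_zero hc0 hNr) _ hfinal hd
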